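/- arXiv:1909.06198 — 2 statements merged into one kernel-verified Lean document; each statement's English description precedes it below -/
import Mathlib

section
/- Let F be a field, p a monic polynomial of degree n over F, C its companion matrix, and E ∈ M_n(F) the matrix whose (1,n) entry is 1 and all other entries are 0. Let Y ∈ M_n(F) commute with C and let T ∈ M_n(F) be arbitrary. Then CT = TC + YE holds if and only if Y = 0 and T commutes with C. -/
open Matrix Polynomial

/-- The companion matrix of a monic polynomial `p` of degree `n`:
ones on the first subdiagonal, `-(coefficients of p)` in the last column. -/
def companionMat (F : Type*) [Field F] (n : ℕ) (p : Polynomial F) :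
    Matrix (Fin n) (Fin n) F :=
  Matrix.of fun i j =>
    if (j : ℕ) = n - 1 then -p.coeff (i : ℕ)
    else if (i : ℕ) = (j : ℕ) + 1 then 1 else 0

/-- The matrix `E` whose `(1,n)` entry is `1` and all other entries are `0`. -/
def Emat (F : Type*) [Field F] (n : ℕ) : Matrix (Fin n) (Fin n) F :=
  Matrix.of fun i j => if (i : ℕ) = 0 ∧ (j : ℕ) = n - 1 then 1 else 0

section Aux

variable {F : Type*} [Field F] {m : ℕ} (p : Polynomial F)

private lemma mul_comp_entry (M : Matrix (Fin (m+1)) (Fin (m+1)) F) (i j : Fin (m+1)) :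
    (companionMat F (m+1) p * M) i j =
      (if 0 < (i:ℕ) then M ⟨(i:ℕ)-1, Nat.lt_of_le_of_lt (Nat.sub_le _ _) i.isLt⟩ j else 0)
        - p.coeff i * M (Fin.last m) j := by
  rw [mul_apply]
  have key : ∀ l : Fin (m+1), companionMat F (m+1) p i l * M l j =
      (if l = Fin.last m then -(p.coeff i * M (Fin.last m) j) else 0)
    + (if 0 < (i:ℕ) then
        (if l = ⟨(i:ℕ)-1, Nat.lt_of_le_of_lt (Nat.sub_le _ _) i.isLt⟩ then M l j else 0)
      else 0) := by
    intro l
    by_cases hl : (l:ℕ) = m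
    · have hle : l = Fin.last m := Fin.ext hl
      subst hle
      have hCe : companionMat F (m+1) p i (Fin.last m) = -p.coeff i := by
        simp [companionMat, Fin.last]
      rw [hCe, if_pos rfl]
      have h2 : 0 < (i:ℕ) → ∀ hb : (i:ℕ)-1 < m+1,
          (Fin.last m : Fin (m+1)) ≠ ⟨(i:ℕ)-1, hb⟩ := by
        intro hpos hb hEq
        have h3 : m = (i:ℕ) - 1 := congrArg Fin.val hEq
        have h4 := i.isLt
        omega
      split_ifs with h3 h4
      · exact absurd h4 (h2 h3 _)
      · ring
      · ring
    · have hne : l ≠ Fin.last m := fun h => hl (congrArg Fin.val h)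
      have hCe : companionMat F (m+1) p i l =
          if (i:ℕ) = (l:ℕ) + 1 then 1 else 0 := by
        simp [companionMat, hl]
      rw [hCe, if_neg hne]
      by_cases hi : (i:ℕ) = (l:ℕ) + 1
      · have hpos : 0 < (i:ℕ) := by omega
        have hleq : l = (⟨(i:ℕ)-1, Nat.lt_of_le_of_lt (Nat.sub_le _ _) i.isLt⟩ : Fin (m+1)) := by
          apply Fin.ext; simp; omega
        rw [if_pos hi, if_pos hpos, if_pos hleq]
        ring
      · rw [if_neg hi]
        have hlne : ∀ hb : (i:ℕ)-1 < m+1,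
            0 < (i:ℕ) → l ≠ (⟨(i:ℕ)-1, hb⟩ : Fin (m+1)) := by
          intro hb hpos hEq
          have h3 := congrArg Fin.val hEq
          simp at h3
          omega
        split_ifs with h3 h4
        · exact absurd h4 (hlne _ h3)
        · ring
        · ring
  rw [Finset.sum_congr rfl (fun l _ => key l), Finset.sum_add_distrib]
  rw [Finset.sum_ite_eq' Finset.univ (Fin.last m)]
  by_cases hi : 0 < (i:ℕ)
  · simp only [hi, if_true]
    rw [Finset.sum_ite_eq' Finset.univ]
    simp only [Finset.mem_univ, if_true]
    ring
  · simp only [hi, if_false, Finset.sum_const_zero, Finset.mem_univ, if_true]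
    ring

private lemma comp_col (M : Matrix (Fin (m+1)) (Fin (m+1)) F) (i : Fin (m+1))
    (j : ℕ) (hj : j < m) :
    (M * companionMat F (m+1) p) i ⟨j, by omega⟩ = M i ⟨j+1, by omega⟩ := by
  rw [mul_apply]
  have key : ∀ l : Fin (m+1), M i l * companionMat F (m+1) p l ⟨j, by omega⟩ =
      if l = (⟨j+1, by omega⟩ : Fin (m+1)) then M i l else 0 := by
    intro l
    have hj' : ¬ ((j:ℕ) = m) := by omega
    have hCe : companionMat F (m+1) p l ⟨j, by omega⟩ =
        if (l:ℕ) = j + 1 then 1 else 0 := by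
      simp [companionMat, hj']
    rw [hCe]
    by_cases hl : (l:ℕ) = j + 1
    · have hle : l = (⟨j+1, by omega⟩ : Fin (m+1)) := Fin.ext hl
      rw [if_pos hl, if_pos hle, mul_one]
    · have hne : l ≠ (⟨j+1, by omega⟩ : Fin (m+1)) := fun h => hl (congrArg Fin.val h)
      rw [if_neg hl, if_neg hne, mul_zero]
  rw [Finset.sum_congr rfl (fun l _ => key l), Finset.sum_ite_eq' Finset.univ]
  simp

private lemma trace_mul_Emat (M : Matrix (Fin (m+1)) (Fin (m+1)) F) :
    Matrix.trace (M * Emat F (m+1)) = M (Fin.last m) 0 := by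
  rw [Matrix.trace]
  have key : ∀ i : Fin (m+1), (M * Emat F (m+1)).diag i =
      if i = Fin.last m then M (Fin.last m) 0 else 0 := by
    intro i
    rw [Matrix.diag_apply, mul_apply]
    have key2 : ∀ l : Fin (m+1), M i l * Emat F (m+1) l i =
        if i = Fin.last m then (if l = (0 : Fin (m+1)) then M i l else 0) else 0 := by
      intro l
      have hE : Emat F (m+1) l i = if (l:ℕ) = 0 ∧ (i:ℕ) = m then 1 else 0 := by
        simp [Emat]
      rw [hE]
      by_cases hi : i = Fin.last m
      · have hi' : (i:ℕ) = m := congrArg Fin.val hi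
        rw [if_pos hi]
        by_cases hl : (l:ℕ) = 0
        · have hle : l = (0 : Fin (m+1)) := by
            apply Fin.ext; simpa using hl
          rw [if_pos ⟨hl, hi'⟩, if_pos hle, mul_one]
        · have hne : l ≠ (0 : Fin (m+1)) := by
            intro h; apply hl; rw [h]; simp
          rw [if_neg (by tauto), if_neg hne, mul_zero]
      · have hi' : ¬ ((i:ℕ) = m) := fun h => hi (Fin.ext h)
        rw [if_neg hi, if_neg (by tauto), mul_zero]
    rw [Finset.sum_congr rfl (fun l _ => key2 l)]
    by_cases hi : i = Fin.last m
    · simp only [hi, if_true]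
      rw [Finset.sum_ite_eq' Finset.univ]
      simp [hi]
    · simp [hi]
  rw [Finset.sum_congr rfl (fun i _ => key i), Finset.sum_ite_eq' Finset.univ]
  simp

end Aux

/-- for `Y` commuting with the companion matrix `C` and `T` arbitrary,
`CT = TC + YE` iff `Y = 0` and `T` commutes with `C`. -/
theorem eq_CT_TC_YE
    {F : Type*} [Field F] {n : ℕ}
    (p : Polynomial F) (hmonic : p.Monic) (hdeg : p.natDegree = n)
    (Y T : Matrix (Fin n) (Fin n) F)
    (hY : Y * companionMat F n p = companionMat F n p * Y) :
    companionMat F n p * T = T * companionMat F n p + Y * Emat F n ↔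
      (Y = 0 ∧ T * companionMat F n p = companionMat F n p * T) := by
  constructor
  · intro h
    obtain _ | m := n
    · exact ⟨by ext i j; exact i.elim0, by ext i j; exact i.elim0⟩
    set C := companionMat F (m+1) p with hC
    have hYE : Y * Emat F (m+1) = C * T - T * C := by
      rw [h]; abel
    have htr : ∀ k : ℕ, (C ^ k * Y) (Fin.last m) 0 = 0 := by
      intro k
      have h1 : C ^ k * Y * Emat F (m+1) = C ^ (k+1) * T - C ^ k * (T * C) := by
        rw [mul_assoc, hYE, mul_sub, ← mul_assoc, ← pow_succ]
      have h2 : Matrix.trace (C ^ k * (T * C)) = Matrix.trace (C ^ (k+1) * T) := by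
        rw [← mul_assoc, Matrix.trace_mul_comm, ← mul_assoc, ← pow_succ']
      have h3 := trace_mul_Emat (F := F) (m := m) (C ^ k * Y)
      rw [h1, Matrix.trace_sub, h2, sub_self] at h3
      exact h3.symm
    have main : ∀ k : ℕ,
        (∀ j : Fin (m+1), m + 1 ≤ (j:ℕ) + k → Y j 0 = 0) ∧
        (∀ i : Fin (m+1), (C ^ k * Y) i 0 =
          if k ≤ (i:ℕ) then
            Y ⟨(i:ℕ) - k, Nat.lt_of_le_of_lt (Nat.sub_le _ _) i.isLt⟩ 0
          else 0) := by
      intro k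
      induction k with
      | zero =>
        constructor
        · intro j hj; exfalso; have := j.isLt; omega
        · intro i
          simp only [pow_zero, one_mul, Nat.zero_le, if_true, Nat.sub_zero]
      | succ k ih =>
        obtain ⟨ih1, ih2⟩ := ih
        have newzero : ∀ j : Fin (m+1), m + 1 ≤ (j:ℕ) + (k+1) → Y j 0 = 0 := by
          intro j hj
          by_cases hjk : m + 1 ≤ (j:ℕ) + k
          · exact ih1 j hjk
          · have hk : k ≤ m := by have := j.isLt; omega
            have htrk := htr k
            rw [ih2 (Fin.last m)] at htrk
            have hkm : k ≤ ((Fin.last m : Fin (m+1)) : ℕ) := by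
              simp [Fin.last]; omega
            rw [if_pos hkm] at htrk
            have hjeq : j = (⟨((Fin.last m : Fin (m+1)) : ℕ) - k,
                Nat.lt_of_le_of_lt (Nat.sub_le _ _) (Fin.last m).isLt⟩ : Fin (m+1)) := by
              apply Fin.ext; simp [Fin.last]; omega
            rw [hjeq]
            exact htrk
        refine ⟨newzero, ?_⟩
        intro i
        have hstep : C ^ (k+1) * Y = C * (C ^ k * Y) := by
          rw [← mul_assoc, ← pow_succ']
        rw [hstep, hC, mul_comp_entry]
        rw [htr k, mul_zero, sub_zero]
        by_cases hi : 0 < (i:ℕ)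
        · rw [if_pos hi, ih2]
          by_cases hki : k + 1 ≤ (i:ℕ)
          · have h1 : k ≤ (i:ℕ) - 1 := by omega
            rw [if_pos h1, if_pos hki]
            congr 2
            simp
            omega
          · have h1 : ¬ (k ≤ (i:ℕ) - 1) := by omega
            rw [if_neg h1, if_neg hki]
        · rw [if_neg hi]
          have hni : ¬ (k + 1 ≤ (i:ℕ)) := by omega
          rw [if_neg hni]
    have col0 : ∀ i : Fin (m+1), Y i 0 = 0 := fun i => (main (m+1)).1 i (by omega)
    have allcols : ∀ jn : ℕ, ∀ hj : jn < m + 1, ∀ i : Fin (m+1), Y i ⟨jn, hj⟩ = 0 := by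
      intro jn
      induction jn with
      | zero =>
        intro hj i
        have : (⟨0, hj⟩ : Fin (m+1)) = 0 := by apply Fin.ext; simp
        rw [this]; exact col0 i
      | succ jn ih =>
        intro hj i
        have hjm : jn < m := by omega
        have h1 : Y i ⟨jn+1, hj⟩ = (Y * C) i ⟨jn, by omega⟩ := by
          rw [hC, comp_col (p := p) Y i jn hjm]
        rw [h1, hY, hC, mul_comp_entry, ih (by omega), ih (by omega)]
        simp
    have hY0 : Y = 0 := by
      ext i j
      have h2 := allcols (j:ℕ) j.isLt i
      have h3 : (⟨(j:ℕ), j.isLt⟩ : Fin (m+1)) = j := by apply Fin.ext; rfl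
      rw [h3] at h2
      simpa using h2
    refine ⟨hY0, ?_⟩
    rw [hY0, zero_mul, add_zero] at h
    exact h.symm
  · rintro ⟨rfl, hT⟩
    rw [zero_mul, add_zero, hT]
end

section
/- Let F be a field, p a monic irreducible and separable polynomial of degree n over F, and C its companion matrix. Let Y be an n×n matrix over F commuting with C and let T ∈ M_n(F) be arbitrary. Then CT = TC + Y holds if and only if Y = 0 and T commutes with C. -/
/-!
Let `K = F[X]/(p)`, a field with basis `1, α, …, α^(n-1)` over `F`, where `α` is the class
of `X`; `C` is the matrix of multiplication by `α` in this basis. Since `K = F[α]`, a matrix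
commuting with `C` commutes with multiplication by every element of `K`, so it is the matrix
`M_c` of multiplication by some `c ∈ K`. If `M_c = CT - TC`, then for all `a ∈ K`,
`Tr_{K/F}(c a) = tr((CT - TC) M_a) = tr(C (T M_a) - (T M_a) C) = 0` because `M_a` commutes
with `C`. As `p` is separable, the trace form of `K/F` is nondegenerate, hence `c = 0`.
-/

open Matrix Polynomial

section

variable {R : Type*} [CommRing R] {p : R[X]}

theorem Polynomial.Monic.X_pow_natDegree_modByMonic (hmonic : p.Monic) :
    X ^ p.natDegree %ₘ p = X ^ p.natDegree - p := by
  nontriviality R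
  have hdeg : (X ^ p.natDegree : R[X]).degree = p.degree := by
    rw [degree_X_pow, degree_eq_natDegree hmonic.ne_zero]
  rw [modByMonic_eq_of_dvd_sub hmonic (p₂ := X ^ p.natDegree - p) (by rw [sub_sub_cancel]),
    (modByMonic_eq_self_iff hmonic).2]
  rw [← hdeg]
  exact degree_sub_lt_left hdeg (monic_X_pow _).ne_zero
    (by rw [leadingCoeff_X_pow, hmonic.leadingCoeff])

theorem AdjoinRoot.leftMulMatrix_root_apply (hmonic : p.Monic)
    (i j : Fin (AdjoinRoot.powerBasis' hmonic).dim) :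
    Algebra.leftMulMatrix (AdjoinRoot.powerBasis' hmonic).basis (AdjoinRoot.root p) i j =
      (X ^ ((j : ℕ) + 1) %ₘ p).coeff i := by
  rw [Algebra.leftMulMatrix_eq_repr_mul, PowerBasis.basis_eq_pow, AdjoinRoot.powerBasis'_gen,
    ← pow_succ', ← AdjoinRoot.mk_X, ← map_pow]
  exact (AdjoinRoot.powerBasisAux'_repr_apply_to_fun hmonic _ i).trans
    (by rw [AdjoinRoot.modByMonicHom_mk])

end

theorem companionMat_eq_leftMulMatrix_root {F : Type*} [Field F] {p : F[X]} (hmonic : p.Monic) :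
    Algebra.leftMulMatrix (AdjoinRoot.powerBasis' hmonic).basis (AdjoinRoot.root p) =
      companionMat F p.natDegree p := by
  refine Matrix.ext fun (i j : Fin p.natDegree) => ?_
  refine (AdjoinRoot.leftMulMatrix_root_apply hmonic i j).trans ?_
  rw [companionMat, Matrix.of_apply]
  obtain hlast | hlt : (j : ℕ) + 1 = p.natDegree ∨ (j : ℕ) + 1 < p.natDegree := by omega
  · rw [hlast, hmonic.X_pow_natDegree_modByMonic]
    simp [coeff_X_pow, i.isLt.ne, show (j : ℕ) = p.natDegree - 1 by omega]
  · have hdeg : (X ^ ((j : ℕ) + 1) : F[X]).degree < p.degree := by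
      rw [degree_X_pow, degree_eq_natDegree hmonic.ne_zero]
      exact_mod_cast hlt
    rw [(modByMonic_eq_self_iff hmonic).2 hdeg]
    simp [coeff_X_pow, show (j : ℕ) ≠ p.natDegree - 1 by omega]

theorem LinearMap.trace_lie_mul_eq_zero_of_commute {R M : Type*} [CommRing R] [AddCommGroup M]
    [Module R M] {f h : Module.End R M} (g : Module.End R M) (hfh : Commute f h) :
    LinearMap.trace R M (⁅f, g⁆ * h) = 0 := by
  rw [Ring.lie_def, sub_mul, map_sub, mul_assoc, mul_assoc, trace_mul_comm R f, mul_assoc,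
    ← hfh.eq, sub_self]

theorem Algebra.commute_lmul_of_adjoin_eq_top {R A : Type*} [CommSemiring R] [Semiring A]
    [Algebra R A] {x : A} (hx : Algebra.adjoin R {x} = ⊤) {f : Module.End R A}
    (hf : Commute f (Algebra.lmul R A x)) (a : A) : Commute f (Algebra.lmul R A a) := by
  have hle : Algebra.adjoin R {x} ≤ (Subalgebra.centralizer R {f}).comap (Algebra.lmul R A) :=
    Algebra.adjoin_le <| Set.singleton_subset_iff.2 <|
      (Subalgebra.mem_centralizer_iff R).2 fun _ hg => (Set.mem_singleton_iff.1 hg) ▸ hf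
  exact (Subalgebra.mem_centralizer_iff R).1 (hle (hx ▸ Algebra.mem_top)) f rfl

theorem Algebra.eq_lmul_of_forall_commute_lmul {R A : Type*} [CommSemiring R] [CommSemiring A]
    [Algebra R A] {f : Module.End R A} (hf : ∀ a, Commute f (Algebra.lmul R A a)) :
    f = Algebra.lmul R A (f 1) :=
  LinearMap.ext fun a => by simpa [mul_comm] using LinearMap.congr_fun (hf a).eq 1

theorem Algebra.trace_mul_eq_zero_of_lmul_eq_lie {R S : Type*} [CommRing R] [CommRing S]
    [Algebra R S] {c x : S} {t : Module.End R S}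
    (hc : Algebra.lmul R S c = ⁅Algebra.lmul R S x, t⁆)
    (a : S) : Algebra.trace R S (c * a) = 0 := by
  rw [Algebra.trace_apply, map_mul, hc]
  exact LinearMap.trace_lie_mul_eq_zero_of_commute t ((Commute.all x a).map (Algebra.lmul R S))

theorem Algebra.eq_zero_of_commute_lmul_of_eq_lie {F K : Type*} [Field F] [Field K]
    [Algebra F K] [FiniteDimensional F K] [Algebra.IsSeparable F K] {x : K}
    (hx : Algebra.adjoin F {x} = ⊤) {f t : Module.End F K}
    (hf : Commute f (Algebra.lmul F K x)) (h : f = ⁅Algebra.lmul F K x, t⁆) : f = 0 := by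
  have hlmul := Algebra.eq_lmul_of_forall_commute_lmul (Algebra.commute_lmul_of_adjoin_eq_top hx hf)
  have hzero : f 1 = 0 := (traceForm_nondegenerate F K).1 _ fun a =>
    Algebra.trace_mul_eq_zero_of_lmul_eq_lie (hlmul.symm.trans h) a
  rw [hlmul, hzero, map_zero]

theorem AdjoinRoot.isSeparable_of_separable {F : Type*} [Field F] {p : F[X]} [Fact (Irreducible p)]
    (hsep : p.Separable) : Algebra.IsSeparable F (AdjoinRoot p) := by
  rw [← separableClosure.eq_top_iff, eq_top_iff,
    ← IntermediateField.adjoin_eq_top_of_algebra F _ AdjoinRoot.adjoinRoot_eq_top,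
    IntermediateField.adjoin_le_iff, Set.singleton_subset_iff, SetLike.mem_coe,
    mem_separableClosure_iff]
  exact hsep.of_dvd (minpoly.dvd F _ (AdjoinRoot.aeval_eq p ▸ AdjoinRoot.mk_self))

theorem Algebra.eq_zero_of_commute_leftMulMatrix_of_mul_eq_mul_add {F K ι : Type*} [Field F]
    [Field K] [Algebra F K] [Algebra.IsSeparable F K] [Fintype ι] [DecidableEq ι]
    (b : Module.Basis ι F K) {x : K} (hx : Algebra.adjoin F {x} = ⊤) {Y T : Matrix ι ι F}
    (hY : Commute Y (Algebra.leftMulMatrix b x))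
    (h : Algebra.leftMulMatrix b x * T = T * Algebra.leftMulMatrix b x + Y) : Y = 0 := by
  have : FiniteDimensional F K := .of_basis b
  let e := LinearMap.toMatrixAlgEquiv b
  have hx' : Algebra.leftMulMatrix b x = e (Algebra.lmul F K x) := Algebra.leftMulMatrix_apply b x
  obtain ⟨y, rfl⟩ := e.surjective Y
  obtain ⟨t, rfl⟩ := e.surjective T
  rw [hx'] at hY h
  suffices y = 0 by rw [this, map_zero]
  refine Algebra.eq_zero_of_commute_lmul_of_eq_lie hx (t := t) (by simpa using hY.map e.symm) ?_
  apply e.injective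
  rw [Ring.lie_def, map_sub, map_mul, map_mul, h, add_sub_cancel_left]

/-- for `p` monic irreducible separable with companion matrix `C`,
`Y ∈ Z(C)` and `T` arbitrary, `CT = TC + Y` iff `Y = 0` and `T ∈ Z(C)`. -/
theorem eq_CT_TC_Y_separable
    {F : Type*} [Field F] {n : ℕ}
    (p : Polynomial F) (hmonic : p.Monic) (hirr : Irreducible p)
    (hsep : p.Separable) (hdeg : p.natDegree = n)
    (Y T : Matrix (Fin n) (Fin n) F)
    (hY : Y * companionMat F n p = companionMat F n p * Y) :
    companionMat F n p * T = T * companionMat F n p + Y ↔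
      (Y = 0 ∧ T * companionMat F n p = companionMat F n p * T) := by
  subst hdeg
  have : Fact (Irreducible p) := ⟨hirr⟩
  have : Algebra.IsSeparable F (AdjoinRoot p) := AdjoinRoot.isSeparable_of_separable hsep
  rw [← companionMat_eq_leftMulMatrix_root hmonic] at hY ⊢
  constructor
  · intro h
    have hY0 := Algebra.eq_zero_of_commute_leftMulMatrix_of_mul_eq_mul_add _
      AdjoinRoot.adjoinRoot_eq_top hY h
    exact ⟨hY0, by rw [h, hY0, add_zero]⟩
  · rintro ⟨rfl, hT⟩
    rw [hT, add_zero]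
end
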